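/- arXiv:2412.07227 — 5 statements merged into one kernel-verified Lean document; each statement's English description precedes it below -/
import Mathlib

section
/- Let n ≥ 3 and let s_0, s_1, …, s_n be vectors in ℝ^d. Define b_0 = s_0, b_n = s_n, and for k = 1, …, n−1 define b_k = (β_{n−1−k}/β_{n−1})·[(−1)^k s_0 + 6 Σ_{j=1}^{k−1} (−1)^{k−j} β_{j−1} s_j] + (β_{k−1}/β_{n−1})·[(−1)^{n−k} s_n + 6 Σ_{j=k}^{n−1} (−1)^{j−k} β_{n−1−j} s_j]. Then for every k = 1, …, n−1 one has b_{k−1} + 4 b_k + b_{k+1} = 6 s_k. -/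
theorem beta_facts (β : ℕ → ℝ)
    (hβ : ∀ ℓ : ℕ, β ℓ =
      ((2 + Real.sqrt 3) ^ (ℓ + 1) - (2 - Real.sqrt 3) ^ (ℓ + 1)) / (2 * Real.sqrt 3)) :
    β 0 = 1 ∧ β 1 = 4 ∧ (∀ ℓ, β (ℓ+2) = 4 * β (ℓ+1) - β ℓ) ∧ (∀ ℓ, 0 < β ℓ) ∧
      (∀ a b, β (a+1) * β (b+1) - β a * β b = β (a+b+2)) := by
  set r := Real.sqrt 3 with hrdef
  have hr : r ^ 2 = 3 := Real.sq_sqrt (by norm_num)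
  have hrpos : 0 < r := Real.sqrt_pos.mpr (by norm_num)
  have hrne : (2 : ℝ) * r ≠ 0 := by positivity
  have hrlt : r < 2 := by nlinarith [hr, hrpos]
  refine ⟨?_, ?_, ?_, ?_, ?_⟩
  · rw [hβ]; field_simp; ring
  · rw [hβ]; field_simp; ring
  · intro ℓ
    rw [hβ, hβ, hβ]
    rw [show ℓ+2+1 = (ℓ+1)+2 by ring, show ℓ+1+1 = (ℓ+1)+1 by ring,
      pow_add, pow_add, pow_add, pow_add]
    field_simp
    ring_nf
    linear_combination ((2+r)^(ℓ+1) - (2-r)^(ℓ+1)) * hr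
  · intro ℓ
    rw [hβ]
    apply div_pos _ (by positivity)
    have h1 : (0:ℝ) < 2 - r := by linarith
    have := pow_lt_pow_left₀ (show 2 - r < 2 + r by linarith) (le_of_lt h1)
      (n := ℓ+1) (by omega)
    linarith
  · intro a b
    rw [hβ, hβ, hβ, hβ, hβ]
    rw [show a+1+1 = (a+1)+1 by ring, show b+1+1 = (b+1)+1 by ring,
      show a+b+2+1 = (a+1)+((b+1)+1) by ring, pow_add, pow_add, pow_add,
      pow_one, pow_one]
    field_simp
    ring_nf
    linear_combination ((2+r)^a*(2+r)^b*(-4-4*r-r^2) + (2+r)^a*(2-r)^b*(4-r^2)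
      + (2-r)^a*(2+r)^b*(4-r^2) + (2-r)^a*(2-r)^b*(-4+4*r-r^2)) * hr


noncomputable def Lv (d : ℕ) (s : ℕ → EuclideanSpace ℝ (Fin d)) (β : ℕ → ℝ) (k : ℕ) :
    EuclideanSpace ℝ (Fin d) :=
  ((-1 : ℝ) ^ k) • s 0 +
    (6 : ℝ) • ∑ j ∈ Finset.Icc 1 (k - 1), ((-1 : ℝ) ^ (k - j) * β (j - 1)) • s j

noncomputable def Rv (d n : ℕ) (s : ℕ → EuclideanSpace ℝ (Fin d)) (β : ℕ → ℝ) (k : ℕ) :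
    EuclideanSpace ℝ (Fin d) :=
  ((-1 : ℝ) ^ (n - k)) • s n +
    (6 : ℝ) • ∑ j ∈ Finset.Icc k (n - 1), ((-1 : ℝ) ^ (j - k) * β (n - 1 - j)) • s j

lemma Lv_one (d : ℕ) (s : ℕ → EuclideanSpace ℝ (Fin d)) (β : ℕ → ℝ) :
    Lv d s β 1 = (-1 : ℝ) • s 0 := by
  simp [Lv]

lemma Rv_top (d n : ℕ) (s : ℕ → EuclideanSpace ℝ (Fin d)) (β : ℕ → ℝ) (hn : 1 ≤ n) :
    Rv d n s β n = s n := by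
  rw [Rv, Finset.Icc_eq_empty (by omega)]
  simp

lemma Lv_rec (d : ℕ) (s : ℕ → EuclideanSpace ℝ (Fin d)) (β : ℕ → ℝ) (k : ℕ) (hk : 1 ≤ k) :
    Lv d s β (k + 1) = -Lv d s β k - (6 * β (k - 1)) • s k := by
  obtain ⟨k0, rfl⟩ : ∃ k0, k = k0 + 1 := ⟨k - 1, by omega⟩
  simp only [Lv, Nat.add_sub_cancel]
  rw [Finset.sum_Icc_succ_top (by omega : 1 ≤ k0 + 1)]
  have hs : ∑ j ∈ Finset.Icc 1 k0, ((-1 : ℝ) ^ (k0 + 1 + 1 - j) * β (j - 1)) • s j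
      = (-1 : ℝ) • ∑ j ∈ Finset.Icc 1 k0, ((-1 : ℝ) ^ (k0 + 1 - j) * β (j - 1)) • s j := by
    rw [Finset.smul_sum]
    refine Finset.sum_congr rfl fun j hj => ?_
    have hj2 := (Finset.mem_Icc.mp hj).2
    rw [smul_smul]
    congr 1
    rw [show k0 + 1 + 1 - j = (k0 + 1 - j) + 1 by omega, pow_succ]
    ring
  rw [hs, show k0 + 1 + 1 - (k0 + 1) = 1 by omega]
  match_scalars <;> (try norm_num) <;> ring

lemma Rv_rec (d n : ℕ) (s : ℕ → EuclideanSpace ℝ (Fin d)) (β : ℕ → ℝ) (k : ℕ)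
    (hk : k ≤ n - 1) (hn : 1 ≤ n) :
    Rv d n s β (k + 1) = -Rv d n s β k + (6 * β (n - 1 - k)) • s k := by
  simp only [Rv]
  have hins : Finset.Icc k (n - 1) = insert k (Finset.Icc (k + 1) (n - 1)) := by
    ext x; simp only [Finset.mem_Icc, Finset.mem_insert]; omega
  rw [hins, Finset.sum_insert (by simp [Finset.mem_Icc])]
  have hs : ∑ j ∈ Finset.Icc (k + 1) (n - 1), ((-1 : ℝ) ^ (j - k) * β (n - 1 - j)) • s j
      = (-1 : ℝ) • ∑ j ∈ Finset.Icc (k + 1) (n - 1), ((-1 : ℝ) ^ (j - (k + 1)) * β (n - 1 - j)) • s j := by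
    rw [Finset.smul_sum]
    refine Finset.sum_congr rfl fun j hj => ?_
    have hj1 := (Finset.mem_Icc.mp hj).1
    rw [smul_smul]
    congr 1
    rw [show j - k = (j - (k + 1)) + 1 by omega, pow_succ]
    ring
  rw [hs, show n - k = (n - (k + 1)) + 1 by omega, Nat.sub_self]
  match_scalars <;> ring

/-- The closed-form formula for the control points b_k of the relaxed uniform B-spline
curve interpolating s_0, …, s_n solves the linear system
b_{k−1} + 4 b_k + b_{k+1} = 6 s_k for k = 1, …, n−1, with b_0 = s_0 and b_n = s_n. -/
theorem relaxed_bspline_control_points (d n : ℕ) (hn : 3 ≤ n)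
    (s b : ℕ → EuclideanSpace ℝ (Fin d)) (β : ℕ → ℝ)
    (hβ : ∀ ℓ : ℕ, β ℓ =
      ((2 + Real.sqrt 3) ^ (ℓ + 1) - (2 - Real.sqrt 3) ^ (ℓ + 1)) / (2 * Real.sqrt 3))
    (hb0 : b 0 = s 0) (hbn : b n = s n)
    (hbk : ∀ k : ℕ, 1 ≤ k → k ≤ n - 1 → b k =
      (β (n - 1 - k) / β (n - 1)) •
        (((-1 : ℝ) ^ k) • s 0 +
          (6 : ℝ) • ∑ j ∈ Finset.Icc 1 (k - 1), ((-1 : ℝ) ^ (k - j) * β (j - 1)) • s j) +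
      (β (k - 1) / β (n - 1)) •
        (((-1 : ℝ) ^ (n - k)) • s n +
          (6 : ℝ) • ∑ j ∈ Finset.Icc k (n - 1), ((-1 : ℝ) ^ (j - k) * β (n - 1 - j)) • s j)) :
    ∀ k : ℕ, 1 ≤ k → k ≤ n - 1 →
      b (k - 1) + (4 : ℝ) • b k + b (k + 1) = (6 : ℝ) • s k := by
  obtain ⟨h0, h1, hrec, hpos, hprod⟩ := beta_facts β hβ
  have hbk' : ∀ k : ℕ, 1 ≤ k → k ≤ n - 1 → b k =
      (β (n - 1 - k) / β (n - 1)) • Lv d s β k + (β (k - 1) / β (n - 1)) • Rv d n s β k :=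
    fun k h1 h2 => hbk k h1 h2
  intro k hk1 hk2
  obtain ⟨m, rfl⟩ : ∃ m, n = m + 3 := ⟨n - 3, by omega⟩
  have hB : β (m + 2) ≠ 0 := ne_of_gt (hpos _)
  rw [show m + 3 - 1 = m + 2 by omega] at hbk'
  rcases eq_or_ne k 1 with rfl | hne1
  · -- k = 1
    rw [show (1:ℕ) - 1 = 0 by omega, hb0,
      hbk' 1 (by omega) (by omega), hbk' 2 (by omega) (by omega)]
    rw [show m + 2 - 1 = m + 1 by omega, show m + 2 - 2 = m by omega,
      show (1:ℕ) - 1 = 0 by omega, show (2:ℕ) - 1 = 1 by omega]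
    have hL2 : Lv d s β 2 = -Lv d s β 1 - (6 * β 0) • s 1 := by
      have h := Lv_rec d s β 1 (by omega)
      rw [show (1:ℕ) + 1 = 2 by omega, show (1:ℕ) - 1 = 0 by omega] at h
      exact h
    have hR2 : Rv d (m+3) s β 2 = -Rv d (m+3) s β 1 + (6 * β (m+1)) • s 1 := by
      have h := Rv_rec d (m+3) s β 1 (by omega) (by omega)
      rw [show (1:ℕ) + 1 = 2 by omega, show m + 3 - 1 - 1 = m + 1 by omega] at h
      exact h
    rw [hL2, hR2, Lv_one]
    match_scalars
    · field_simp
      linear_combination hrec m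
    · field_simp
      linear_combination 4 * h0 - h1
    · field_simp
      have hp := hprod 0 m
      rw [show 0 + m + 2 = m + 2 by omega] at hp
      linear_combination hp
  · rcases eq_or_ne k (m + 2) with rfl | hne2
    · -- k = n - 1
      rw [show m + 2 - 1 = m + 1 by omega, show m + 2 + 1 = m + 3 by omega, hbn,
        hbk' (m+1) (by omega) (by omega), hbk' (m+2) (by omega) (by omega)]
      rw [show m + 2 - (m + 1) = 1 by omega, show m + 1 - 1 = m by omega,
        show m + 2 - (m + 2) = 0 by omega, show m + 2 - 1 = m + 1 by omega]
      have hLm : Lv d s β (m + 1) = -Lv d s β (m + 2) - (6 * β m) • s (m + 1) := by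
        have h := Lv_rec d s β (m + 1) (by omega)
        rw [show m + 1 + 1 = m + 2 by omega, show m + 1 - 1 = m by omega] at h
        rw [h]; module
      have hRm : Rv d (m+3) s β (m + 1) = -Rv d (m+3) s β (m + 2) + (6 * β 1) • s (m + 1) := by
        have h := Rv_rec d (m+3) s β (m + 1) (by omega) (by omega)
        rw [show m + 1 + 1 = m + 2 by omega, show m + 3 - 1 - (m + 1) = 1 by omega] at h
        rw [h]; module
      have hRtop : Rv d (m+3) s β (m + 2) = (6 * β 0) • s (m + 2) - s (m + 3) := by
        have h := Rv_rec d (m+3) s β (m + 2) (by omega) (by omega)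
        rw [show m + 2 + 1 = m + 3 by omega, show m + 3 - 1 - (m + 2) = 0 by omega,
          Rv_top d (m+3) s β (by omega)] at h
        rw [h]
        module
      rw [hLm, hRm, hRtop]
      match_scalars
      · field_simp
        linear_combination 4 * h0 - h1
      · field_simp
        ring
      · field_simp
        linear_combination (-β 0) * hrec m + β (m+2) * h0
      · field_simp
        linear_combination hrec m
    · -- interior
      obtain ⟨a, rfl⟩ : ∃ a, k = a + 2 := ⟨k - 2, by omega⟩
      obtain ⟨c, rfl⟩ : ∃ c, m = a + 1 + c := ⟨m - (a + 1), by omega⟩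
      rw [show a + 2 - 1 = a + 1 by omega,
        hbk' (a+1) (by omega) (by omega), hbk' (a+2) (by omega) (by omega),
        hbk' (a+3) (by omega) (by omega)]
      rw [show a + 1 + c + 2 - (a + 1) = c + 1 + 1 by omega,
        show a + 1 - 1 = a by omega,
        show a + 1 + c + 2 - (a + 2) = c + 1 by omega,
        show a + 2 - 1 = a + 1 by omega,
        show a + 1 + c + 2 - (a + 3) = c by omega,
        show a + 3 - 1 = a + 2 by omega]
      have hL1 : Lv d s β (a + 1) = -Lv d s β (a + 2) - (6 * β a) • s (a + 1) := by
        have h := Lv_rec d s β (a + 1) (by omega)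
        rw [show a + 1 + 1 = a + 2 by omega, show a + 1 - 1 = a by omega] at h
        rw [h]; module
      have hR1 : Rv d (a+1+c+3) s β (a + 1)
          = -Rv d (a+1+c+3) s β (a + 2) + (6 * β (c + 2)) • s (a + 1) := by
        have h := Rv_rec d (a+1+c+3) s β (a + 1) (by omega) (by omega)
        rw [show a + 1 + 1 = a + 2 by omega,
          show a + 1 + c + 3 - 1 - (a + 1) = c + 2 by omega] at h
        rw [h]; module
      have hL3 : Lv d s β (a + 3) = -Lv d s β (a + 2) - (6 * β (a + 1)) • s (a + 2) := by
        have h := Lv_rec d s β (a + 2) (by omega)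
        rw [show a + 2 + 1 = a + 3 by omega, show a + 2 - 1 = a + 1 by omega] at h
        rw [h]
      have hR3 : Rv d (a+1+c+3) s β (a + 3)
          = -Rv d (a+1+c+3) s β (a + 2) + (6 * β (c + 1)) • s (a + 2) := by
        have h := Rv_rec d (a+1+c+3) s β (a + 2) (by omega) (by omega)
        rw [show a + 2 + 1 = a + 3 by omega,
          show a + 1 + c + 3 - 1 - (a + 2) = c + 1 by omega] at h
        rw [h]
      rw [hL1, hR1, hL3, hR3]
      match_scalars
      · field_simp
        linear_combination (-1 : ℝ) * hrec c
      · field_simp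
        ring
      · field_simp
        linear_combination (-1 : ℝ) * hrec a
      · field_simp
        linear_combination hprod (a+1) c
end

section
/- Let n ≥ 3 and let s_0, s_1, …, s_n be vectors in ℝ^d. Then there is exactly one family of vectors b_0, b_1, …, b_n in ℝ^d satisfying b_0 = s_0, b_n = s_n, and b_{k−1} + 4 b_k + b_{k+1} = 6 s_k for all k = 1, …, n−1. -/
noncomputable section

namespace RelaxedBSpline

variable (d n : ℕ)

/-- The tridiagonal operator of the interpolation system. -/
def T : (Fin (n + 1) → EuclideanSpace ℝ (Fin d)) →ₗ[ℝ]
    (Fin (n + 1) → EuclideanSpace ℝ (Fin d)) where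
  toFun b := fun k =>
    if h0 : (k : ℕ) = 0 then b 0
    else if hn : (k : ℕ) = n then b (Fin.last n)
    else b ⟨(k : ℕ) - 1, by have := k.isLt; omega⟩ + (4 : ℝ) • b k +
      b ⟨(k : ℕ) + 1, by have := k.isLt; omega⟩
  map_add' x y := by
    funext k
    by_cases h0 : (k : ℕ) = 0
    · simp [h0, show k = 0 from Fin.ext h0]
    · by_cases hn : (k : ℕ) = n
      · have hne : n ≠ 0 := by omega
        simp [h0, hn, hne, show k ≠ 0 from by rintro rfl; simp at h0]
      · simp only [h0, hn, dif_neg, not_false_iff, Pi.add_apply]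
        module
  map_smul' c x := by
    funext k
    by_cases h0 : (k : ℕ) = 0
    · simp [h0, show k = 0 from Fin.ext h0]
    · by_cases hn : (k : ℕ) = n
      · have hne : n ≠ 0 := by omega
        simp [h0, hn, hne, show k ≠ 0 from by rintro rfl; simp at h0]
      · simp only [h0, hn, dif_neg, not_false_iff, Pi.smul_apply, RingHom.id_apply]
        module

lemma T_injective (hn3 : 3 ≤ n) : Function.Injective (T d n) := by
  rw [← LinearMap.ker_eq_bot, LinearMap.ker_eq_bot']
  intro b hb
  have hb' : ∀ k, T d n b k = 0 := fun k => congrFun hb k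
  set M : ℝ := Finset.univ.sup' Finset.univ_nonempty (fun k => ‖b k‖) with hMdef
  have hM : ∀ k, ‖b k‖ ≤ M := fun k => Finset.le_sup' (fun k => ‖b k‖) (Finset.mem_univ k)
  have hb0 : b 0 = 0 := by
    have := hb' 0
    simpa [T] using this
  have hne : n ≠ 0 := by omega
  have hblast : b (Fin.last n) = 0 := by
    have := hb' (Fin.last n)
    simpa [T, Fin.last, hne] using this
  have key : ∀ k : Fin (n + 1), ‖b k‖ ≤ M / 2 := by
    intro k
    have hM0 : 0 ≤ M := le_trans (norm_nonneg _) (hM 0)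
    by_cases h0 : (k : ℕ) = 0
    · have : k = 0 := Fin.ext h0
      rw [this, hb0]
      simpa using by linarith
    · by_cases hkn : (k : ℕ) = n
      · have : k = Fin.last n := Fin.ext hkn
        rw [this, hblast]
        simpa using by linarith
      · have heq := hb' k
        simp only [T, LinearMap.coe_mk, AddHom.coe_mk, h0, hkn, dif_neg,
          not_false_iff] at heq
        have h4 : (4 : ℝ) • b k =
            -(b ⟨(k : ℕ) - 1, by have := k.isLt; omega⟩ +
              b ⟨(k : ℕ) + 1, by have := k.isLt; omega⟩) := by
          have := heq
          linear_combination (norm := module) this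
        have hnorm : ‖(4 : ℝ) • b k‖ ≤ 2 * M := by
          rw [h4, norm_neg]
          calc ‖b ⟨(k : ℕ) - 1, by have := k.isLt; omega⟩ +
                b ⟨(k : ℕ) + 1, by have := k.isLt; omega⟩‖
              ≤ ‖b ⟨(k : ℕ) - 1, by have := k.isLt; omega⟩‖ +
                ‖b ⟨(k : ℕ) + 1, by have := k.isLt; omega⟩‖ := norm_add_le _ _
            _ ≤ 2 * M := by have := hM ⟨(k : ℕ) - 1, by have := k.isLt; omega⟩
                            have := hM ⟨(k : ℕ) + 1, by have := k.isLt; omega⟩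
                            linarith
        rw [norm_smul] at hnorm
        simp only [Real.norm_ofNat] at hnorm
        linarith
  have hM2 : M ≤ M / 2 := Finset.sup'_le _ _ fun k _ => key k
  have hMle : M ≤ 0 := by linarith
  funext k
  have : ‖b k‖ ≤ 0 := le_trans (hM k) hMle
  simpa using norm_le_zero_iff.mp this

end RelaxedBSpline

/-- Given n ≥ 3 and points s_0, …, s_n in ℝ^d, there is exactly one family of vectors
b_0, …, b_n with b_0 = s_0, b_n = s_n, and b_{k−1} + 4 b_k + b_{k+1} = 6 s_k for
k = 1, …, n−1. -/
theorem relaxed_bspline_exists_unique (d n : ℕ) (hn : 3 ≤ n)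
    (s : Fin (n + 1) → EuclideanSpace ℝ (Fin d)) :
    ∃! b : Fin (n + 1) → EuclideanSpace ℝ (Fin d),
      b 0 = s 0 ∧ b (Fin.last n) = s (Fin.last n) ∧
      ∀ (k : ℕ) (_ : 1 ≤ k) (h2 : k ≤ n - 1),
        b ⟨k - 1, by omega⟩ + (4 : ℝ) • b ⟨k, by omega⟩ + b ⟨k + 1, by omega⟩ =
          (6 : ℝ) • s ⟨k, by omega⟩ := by
  classical
  set t : Fin (n + 1) → EuclideanSpace ℝ (Fin d) := fun k =>
    if (k : ℕ) = 0 then s 0 else if (k : ℕ) = n then s (Fin.last n)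
    else (6 : ℝ) • s k with ht
  have hinj := RelaxedBSpline.T_injective d n hn
  have hsurj : Function.Surjective (RelaxedBSpline.T d n) :=
    (LinearMap.injective_iff_surjective).mp hinj
  -- characterization
  have hchar : ∀ b : Fin (n + 1) → EuclideanSpace ℝ (Fin d),
      (b 0 = s 0 ∧ b (Fin.last n) = s (Fin.last n) ∧
      ∀ (k : ℕ) (_ : 1 ≤ k) (h2 : k ≤ n - 1),
        b ⟨k - 1, by omega⟩ + (4 : ℝ) • b ⟨k, by omega⟩ + b ⟨k + 1, by omega⟩ =
          (6 : ℝ) • s ⟨k, by omega⟩) ↔ RelaxedBSpline.T d n b = t := by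
    intro b
    constructor
    · rintro ⟨h0, hlast, hmid⟩
      funext k
      by_cases hk0 : (k : ℕ) = 0
      · have : k = 0 := Fin.ext hk0
        subst this
        simp [RelaxedBSpline.T, ht, h0]
      · by_cases hkn : (k : ℕ) = n
        · have : k = Fin.last n := Fin.ext hkn
          subst this
          have hne : n ≠ 0 := by omega
          simp [RelaxedBSpline.T, ht, hlast, hne]
        · have h1 : 1 ≤ (k : ℕ) := by omega
          have h2 : (k : ℕ) ≤ n - 1 := by have := k.isLt; omega
          have := hmid (k : ℕ) h1 h2
          simp only [RelaxedBSpline.T, LinearMap.coe_mk, AddHom.coe_mk, hk0, hkn,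
            dif_neg, not_false_iff, ht, if_neg]
          convert this using 3 <;> simp [Fin.ext_iff]
    · intro hTb
      have hb' : ∀ k, RelaxedBSpline.T d n b k = t k := fun k => congrFun hTb k
      refine ⟨?_, ?_, ?_⟩
      · have := hb' 0
        simpa [RelaxedBSpline.T, ht] using this
      · have hne : n ≠ 0 := by omega
        have := hb' (Fin.last n)
        simpa [RelaxedBSpline.T, ht, Fin.last, hne] using this
      · intro k h1 h2
        have hk : (⟨k, by omega⟩ : Fin (n + 1)) = ⟨k, by omega⟩ := rfl
        have := hb' ⟨k, by omega⟩
        have hk0 : k ≠ 0 := by omega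
        have hkn : k ≠ n := by omega
        simp only [RelaxedBSpline.T, LinearMap.coe_mk, AddHom.coe_mk, hk0, hkn,
          dif_neg, not_false_iff, ht, if_neg] at this
        convert this using 3 <;> simp [Fin.ext_iff]
  obtain ⟨b, hb⟩ := hsurj t
  refine ⟨b, (hchar b).mpr hb, ?_⟩
  intro b' hb'
  exact hinj (((hchar b').mp hb').trans hb.symm)
end
end

section
/- For every integer n ≥ 2, the quantity β_{n−1} − 2β_n + (−1)^{n−1} is nonzero. -/
/-- For every integer n ≥ 2, the quantity β_{n−1} − 2β_n + (−1)^{n−1} is nonzero, where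
β_ℓ = ((2+√3)^{ℓ+1} − (2−√3)^{ℓ+1})/(2√3). -/
theorem periodic_denominator_ne_zero (n : ℕ) (hn : 2 ≤ n) (β : ℕ → ℝ)
    (hβ : ∀ ℓ : ℕ, β ℓ =
      ((2 + Real.sqrt 3) ^ (ℓ + 1) - (2 - Real.sqrt 3) ^ (ℓ + 1)) / (2 * Real.sqrt 3)) :
    β (n - 1) - 2 * β n + (-1 : ℝ) ^ (n - 1) ≠ 0 := by
  set s := Real.sqrt 3 with hs
  have hs2 : s ^ 2 = 3 := Real.sq_sqrt (by norm_num)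
  have hs0 : 0 ≤ s := Real.sqrt_nonneg 3
  clear hs
  clear_value s
  have hs1 : 1 < s := by nlinarith
  have hslt : s < 2 := by nlinarith
  have hsne : s ≠ 0 := by positivity
  have hn1 : n - 1 + 1 = n := by omega
  have h1 := hβ (n - 1)
  rw [hn1] at h1
  have h2 := hβ n
  have e1 : (2 + s) ^ (n + 1) = (2 + s) ^ n * (2 + s) := pow_succ _ _
  have e2 : (2 - s) ^ (n + 1) = (2 - s) ^ n * (2 - s) := pow_succ _ _
  have key : β (n - 1) - 2 * β n =
      -(((2 + s) ^ (n + 1) + (2 - s) ^ (n + 1)) / 2) := by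
    rw [h1, h2, e1, e2]
    field_simp
    linear_combination ((2 + s) ^ n - (2 - s) ^ n) * hs2
  rw [key]
  have hA : (3 : ℝ) ^ (n + 1) ≤ (2 + s) ^ (n + 1) :=
    pow_le_pow_left₀ (by norm_num) (by linarith) _
  have hA2 : (27 : ℝ) ≤ (3 : ℝ) ^ (n + 1) := by
    calc (27 : ℝ) = 3 ^ 3 := by norm_num
    _ ≤ 3 ^ (n + 1) := pow_le_pow_right₀ (by norm_num) (by omega)
  have hB : (0 : ℝ) < (2 - s) ^ (n + 1) := pow_pos (by linarith) _
  have hpm : ((-1 : ℝ)) ^ (n - 1) ≤ 1 := by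
    rcases Nat.even_or_odd (n - 1) with h | h
    · rw [Even.neg_one_pow h]
    · rw [Odd.neg_one_pow h]; norm_num
  linarith
end

section
/- Let n ≥ 3 and let s_0, s_1, …, s_n be vectors in ℝ^d. Define b_0 = (3/(β_{n−1} − 2β_n + (−1)^{n−1}))·( −β_n s_0 + Σ_{j=1}^{n} [(−1)^{j−1} β_{n−j} + (−1)^{n−j} β_{j−1}] s_j ), and for k = 1, …, n define b_k = (β_{n−k}/β_n)·[(−1)^k b_0 + 6 Σ_{j=1}^{k−1} (−1)^{k−j} β_{j−1} s_j] + (β_{k−1}/β_n)·[(−1)^{n+1−k} b_0 + 6 Σ_{j=k}^{n} (−1)^{j−k} β_{n−j} s_j]. Then, with indices read modulo n+1 (so b_{n+1} = b_0), one has b_{k−1} + 4 b_k + b_{k+1} = 6 s_k for every k = 0, 1, …, n. -/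
section aux
variable {E : Type*} [AddCommGroup E] [Module ℝ E]

omit [Module ℝ E] in
lemma peelTop (f : ℕ → E) (a b c : ℕ) (hb : b = c + 1) (h : a ≤ b) :
    ∑ j ∈ Finset.Icc a b, f j = (∑ j ∈ Finset.Icc a c, f j) + f b := by
  subst hb; exact Finset.sum_Icc_succ_top h f

lemma sumA (β : ℕ → ℝ) (s : ℕ → E) (a b c : ℕ) (hb : b = a + 1) (hc : c = a + 2) :
    ∑ j ∈ Finset.Icc 1 b, ((-1:ℝ)^(c-j) * β (j-1)) • s j
      = -∑ j ∈ Finset.Icc 1 a, ((-1:ℝ)^(b-j) * β (j-1)) • s j - β a • s b := by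
  subst hb hc
  rw [Finset.sum_Icc_succ_top (by omega)]
  have h1 : ∀ j ∈ Finset.Icc 1 a, ((-1:ℝ)^(a+2-j) * β (j-1)) • s j
      = -(((-1:ℝ)^(a+1-j) * β (j-1)) • s j) := by
    intro j hj
    simp only [Finset.mem_Icc] at hj
    rw [show a+2-j = (a+1-j)+1 from by omega, pow_succ]
    module
  rw [Finset.sum_congr rfl h1, Finset.sum_neg_distrib,
    show a+2-(a+1) = 1 from by omega, show a+1-1 = a from by omega, pow_one]
  module

lemma sumB (β : ℕ → ℝ) (s : ℕ → E) (n k k1 : ℕ) (hk1 : k1 = k + 1) (hkn : k ≤ n) :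
    ∑ j ∈ Finset.Icc k1 n, ((-1:ℝ)^(j-k1) * β (n-j)) • s j
      = -∑ j ∈ Finset.Icc k n, ((-1:ℝ)^(j-k) * β (n-j)) • s j + β (n-k) • s k := by
  subst hk1
  rw [Finset.Icc_eq_cons_Ioc hkn, Finset.sum_cons, ← Finset.Icc_add_one_left_eq_Ioc]
  have h1 : ∀ j ∈ Finset.Icc (k+1) n, ((-1:ℝ)^(j-k) * β (n-j)) • s j
      = -(((-1:ℝ)^(j-(k+1)) * β (n-j)) • s j) := by
    intro j hj
    simp only [Finset.mem_Icc] at hj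
    rw [show j-k = (j-(k+1))+1 from by omega, pow_succ]
    module
  rw [Finset.sum_congr rfl h1, Finset.sum_neg_distrib, Nat.sub_self, pow_zero]
  module

lemma prodId (β : ℕ → ℝ) (hβ0 : β 0 = 1) (hβ1 : β 1 = 4)
    (hrec : ∀ ℓ, β (ℓ+2) = 4 * β (ℓ+1) - β ℓ) :
    ∀ b a : ℕ, β (a+1) * β (b+1) - β a * β b = β (a+b+2) := by
  intro b
  induction b using Nat.twoStepInduction with
  | zero => intro a; rw [hβ1, hβ0, show a+0+2 = a+2 from by omega, hrec a]; ring
  | one =>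
    intro a
    have h2 : β 2 = 15 := by have := hrec 0; rw [hβ1, hβ0] at this; linarith
    have r1 := hrec (a+1)
    have r2 := hrec a
    rw [show (1:ℕ)+1 = 2 from rfl, h2, hβ1, show a+1+2 = (a+1)+2 from rfl]
    rw [show a+1+1 = a+2 from by omega] at r1
    linarith [r1, r2]
  | more m ih1 ih2 =>
    intro a
    have e1 := ih1 a
    have e2 := ih2 a
    have r1 := hrec (m+1)
    have r2 := hrec m
    have r3 := hrec (a+m+2)
    rw [show m+1+2 = m+3 from by omega, show m+1+1 = m+2 from by omega] at r1
    rw [show a+m+2+2 = a+m+4 from by omega, show a+m+2+1 = a+m+3 from by omega] at r3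
    rw [show a+(m+1)+2 = a+m+3 from by omega, show m+1+1 = m+2 from by omega] at e2
    rw [show m+2+1 = m+3 from by omega, show m+1+1 = m+2 from by omega,
      show a+(m+2)+2 = a+m+4 from by omega]
    linear_combination 4*e2 - e1 + β (a+1) * r1 - β a * r2 - r3

end aux

set_option maxHeartbeats 2000000 in
/-- The closed-form formulas for the control points b_0, …, b_n of the periodic uniform
B-spline curve interpolating s_0, …, s_n solve the cyclic linear system
b_{k−1} + 4 b_k + b_{k+1} = 6 s_k, indices read modulo n+1. -/
theorem periodic_bspline_control_points (d n : ℕ) (hn : 3 ≤ n)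
    (s b : ℕ → EuclideanSpace ℝ (Fin d)) (β : ℕ → ℝ)
    (hβ : ∀ ℓ : ℕ, β ℓ =
      ((2 + Real.sqrt 3) ^ (ℓ + 1) - (2 - Real.sqrt 3) ^ (ℓ + 1)) / (2 * Real.sqrt 3))
    (hb0 : b 0 = (3 / (β (n - 1) - 2 * β n + (-1 : ℝ) ^ (n - 1))) •
      ((-(β n)) • s 0 +
        ∑ j ∈ Finset.Icc 1 n,
          ((-1 : ℝ) ^ (j - 1) * β (n - j) + (-1 : ℝ) ^ (n - j) * β (j - 1)) • s j))
    (hbk : ∀ k : ℕ, 1 ≤ k → k ≤ n → b k =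
      (β (n - k) / β n) •
        (((-1 : ℝ) ^ k) • b 0 +
          (6 : ℝ) • ∑ j ∈ Finset.Icc 1 (k - 1), ((-1 : ℝ) ^ (k - j) * β (j - 1)) • s j) +
      (β (k - 1) / β n) •
        (((-1 : ℝ) ^ (n + 1 - k)) • b 0 +
          (6 : ℝ) • ∑ j ∈ Finset.Icc k n, ((-1 : ℝ) ^ (j - k) * β (n - j)) • s j)) :
    ∀ k : ℕ, k ≤ n →
      b ((k + n) % (n + 1)) + (4 : ℝ) • b k + b ((k + 1) % (n + 1)) = (6 : ℝ) • s k := by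
  have s3 : Real.sqrt 3 ^ 2 = 3 := Real.sq_sqrt (by norm_num)
  have s3pos : (0:ℝ) < Real.sqrt 3 := Real.sqrt_pos.mpr (by norm_num)
  have hβ0 : β 0 = 1 := by
    rw [hβ 0, div_eq_one_iff_eq (by positivity)]; ring
  have hβ1 : β 1 = 4 := by
    rw [hβ 1, div_eq_iff (by positivity)]; ring
  have hrec : ∀ ℓ, β (ℓ+2) = 4 * β (ℓ+1) - β ℓ := by
    intro ℓ
    have key : ∀ x : ℝ, x^2 = 4*x - 1 → x^(ℓ+2+1) = 4*x^(ℓ+1+1) - x^(ℓ+1) := by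
      intro x hx
      linear_combination x^(ℓ+1) * hx
    have h2a : (2+Real.sqrt 3)^2 = 4*(2+Real.sqrt 3) - 1 := by nlinarith [s3]
    have h2b : (2-Real.sqrt 3)^2 = 4*(2-Real.sqrt 3) - 1 := by nlinarith [s3]
    rw [hβ (ℓ+2), hβ (ℓ+1), hβ ℓ]
    linear_combination (key _ h2a - key _ h2b) / (2*Real.sqrt 3)
  have hmono : ∀ ℓ, 1 ≤ β ℓ ∧ β ℓ ≤ β (ℓ+1) := by
    intro ℓ
    induction ℓ with
    | zero => rw [hβ0, hβ1]; norm_num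
    | succ m ih =>
      have h2 := hrec m
      refine ⟨le_trans ih.1 ih.2, ?_⟩
      rw [show m+1+1 = m+2 from by omega, h2]
      linarith [ih.1, ih.2]
  have hβn : β n ≠ 0 := by
    have := (hmono n).1; intro h; rw [h] at this; linarith
  have hrn : β n = 4 * β (n-1) - β (n-2) := by
    have := hrec (n-2)
    rwa [show n-2+2 = n from by omega, show n-2+1 = n-1 from by omega] at this
  have hmle : β (n-2) ≤ β (n-1) := by
    have := (hmono (n-2)).2; rwa [show n-2+1 = n-1 from by omega] at this
  have hone : (1:ℝ) ≤ β (n-1) := (hmono _).1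
  have hD : β (n-1) - 2*β n + (-1:ℝ)^(n-1) ≠ 0 := by
    have : β (n-1) - 2*β n + (-1:ℝ)^(n-1) < 0 := by
      rcases Nat.even_or_odd (n-1) with h | h
      · rw [h.neg_one_pow]; nlinarith [hrn, hmle, hone]
      · rw [h.neg_one_pow]; nlinarith [hrn, hmle, hone]
    exact this.ne
  have hpow : ((-1:ℝ))^n = -((-1:ℝ))^(n-1) := by
    conv_lhs => rw [show n = (n-1)+1 from by omega]
    rw [pow_succ]; ring
  intro k hkle
  by_cases hk0 : k = 0
  · -- k = 0 : b n + 4 b 0 + b 1 = 6 s 0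
    subst hk0
    rw [show (0 + n) % (n+1) = n from by rw [Nat.zero_add]; exact Nat.mod_eq_of_lt (by omega),
      show (0 + 1) % (n+1) = 1 from by rw [Nat.zero_add]; exact Nat.mod_eq_of_lt (by omega)]
    have e1 := hbk n (by omega) le_rfl
    have e2 := hbk 1 (by omega) (by omega)
    rw [show n - n = 0 from by omega, show n + 1 - n = 1 from by omega, hβ0, pow_one,
      Finset.Icc_self, Finset.sum_singleton, show n - n = 0 from by omega, hβ0, pow_zero,
      hpow] at e1
    rw [show (1:ℕ) - 1 = 0 from by omega,
      Finset.Icc_eq_empty (by omega : ¬(1:ℕ) ≤ 0), Finset.sum_empty, smul_zero, add_zero,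
      pow_one, hβ0, show n + 1 - 1 = n from by omega, hpow] at e2
    have hsplit2 : (∑ j ∈ Finset.Icc 1 n, ((-1:ℝ)^(n-j) * β (j-1)) • s j)
        = (∑ j ∈ Finset.Icc 1 (n-1), ((-1:ℝ)^(n-j) * β (j-1)) • s j) + β (n-1) • s n := by
      rw [peelTop _ 1 n (n-1) (by omega) (by omega),
        show n - n = 0 from by omega, pow_zero, one_mul]
    have hsplit : (∑ j ∈ Finset.Icc 1 n,
          ((-1:ℝ)^(j-1) * β (n-j) + (-1:ℝ)^(n-j) * β (j-1)) • s j)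
        = (∑ j ∈ Finset.Icc 1 n, ((-1:ℝ)^(j-1) * β (n-j)) • s j)
          + ((∑ j ∈ Finset.Icc 1 (n-1), ((-1:ℝ)^(n-j) * β (j-1)) • s j) + β (n-1) • s n) := by
      rw [← hsplit2, ← Finset.sum_add_distrib]
      exact Finset.sum_congr rfl fun j _ => by rw [add_smul]
    rw [hsplit] at hb0
    rw [hb0] at e1 e2
    rw [e1, e2, hb0]
    have hD' : β (n-1) - β n * 2 + (-1:ℝ)^(n-1) ≠ 0 := by rw [mul_comm]; exact hD
    match_scalars <;> field_simp [hβn, hD, hD'] <;> ring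
  by_cases hkn : k = n
  · -- k = n : b (n-1) + 4 b n + b 0 = 6 s n
    rw [hkn]
    rw [show (n + n) % (n+1) = n - 1 from by
        rw [show n + n = (n+1) + (n-1) from by omega, Nat.add_mod_left,
          Nat.mod_eq_of_lt (by omega)],
      show (n + 1) % (n+1) = 0 from Nat.mod_self (n+1)]
    have e1 := hbk (n-1) (by omega) (by omega)
    have e2 := hbk n (by omega) le_rfl
    rw [peelTop _ (n-1) n (n-1) (by omega) (by omega), Finset.Icc_self,
      Finset.sum_singleton] at e1
    rw [show n - (n-1) = 1 from by omega, show n-1-1 = n-2 from by omega,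
      show n+1-(n-1) = 2 from by omega, show n-1-(n-1) = 0 from by omega,
      show n - n = 0 from by omega, pow_zero, pow_one, hβ0, hβ1] at e1
    rw [sumA β s (n-2) (n-1) n (by omega) (by omega),
      show n - n = 0 from by omega, show n+1-n = 1 from by omega, hβ0, pow_one,
      Finset.Icc_self, Finset.sum_singleton, show n - n = 0 from by omega,
      pow_zero, hβ0, hpow] at e2
    rw [hrn] at e1 e2
    have hβn' : 4 * β (n-1) - β (n-2) ≠ 0 := by rw [← hrn]; exact hβn
    rw [e1, e2]
    match_scalars <;> field_simp <;> ring
  by_cases hk1 : k = 1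
  · -- k = 1 : b 0 + 4 b 1 + b 2 = 6 s 1
    subst hk1
    rw [show (1 + n) % (n+1) = 0 from by rw [show 1 + n = n+1 from by omega, Nat.mod_self],
      show (1 + 1) % (n+1) = 2 from Nat.mod_eq_of_lt (by omega)]
    have e1 := hbk 1 (by omega) (by omega)
    have e2 := hbk 2 (by omega) (by omega)
    rw [show (1:ℕ) - 1 = 0 from by omega,
      Finset.Icc_eq_empty (by omega : ¬(1:ℕ) ≤ 0), Finset.sum_empty, smul_zero, add_zero,
      pow_one, hβ0, show n + 1 - 1 = n from by omega, hpow] at e1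
    rw [show (2:ℕ) - 1 = 1 from by omega, Finset.Icc_self, Finset.sum_singleton,
      show (2:ℕ) - 1 = 1 from by omega, show (1:ℕ) - 1 = 0 from by omega,
      pow_one, hβ0, hβ1, show n + 1 - 2 = n - 1 from by omega,
      sumB β s n 1 2 (by omega) (by omega)] at e2
    rw [hrn] at e1 e2
    have hβn' : 4 * β (n-1) - β (n-2) ≠ 0 := by rw [← hrn]; exact hβn
    rw [e1, e2]
    match_scalars <;> field_simp <;> ring
  · -- 2 ≤ k ≤ n-1
    obtain ⟨m, rfl⟩ : ∃ m, k = m + 2 := ⟨k - 2, by omega⟩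
    obtain ⟨t, ht⟩ : ∃ t, n = m + 3 + t := ⟨n - (m+3), by omega⟩
    rw [show (m + 2 + n) % (n+1) = m + 1 from by
        rw [show m + 2 + n = (n+1) + (m+1) from by omega, Nat.add_mod_left,
          Nat.mod_eq_of_lt (by omega)],
      show (m + 2 + 1) % (n+1) = m + 3 from by
        rw [show m + 2 + 1 = m + 3 from by omega]; exact Nat.mod_eq_of_lt (by omega)]
    have e1 := hbk (m+1) (by omega) (by omega)
    have e2 := hbk (m+2) (by omega) (by omega)
    have e3 := hbk (m+3) (by omega) (by omega)
    have sa1 := sumA β s m (m+1) (m+2) (by omega) (by omega)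
    have sa2 := sumA β s (m+1) (m+2) (m+3) (by omega) (by omega)
    have sb1 := sumB β s n (m+1) (m+2) (by omega) (by omega)
    have sb2 := sumB β s n (m+2) (m+3) (by omega) (by omega)
    rw [show m+1-1 = m from by omega, show n-(m+1) = t+2 from by omega,
      show n+1-(m+1) = t+3 from by omega] at e1
    rw [show m+2-1 = m+1 from by omega, sa1, sb1,
      show n-(m+2) = t+1 from by omega, show n-(m+1) = t+2 from by omega,
      show n+1-(m+2) = t+2 from by omega] at e2
    rw [show m+3-1 = m+2 from by omega, sa2, sa1, sb2, sb1,
      show n-(m+3) = t from by omega, show n-(m+2) = t+1 from by omega,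
      show n-(m+1) = t+2 from by omega,
      show n+1-(m+3) = t+1 from by omega] at e3
    have hm2 : β (m+2) = 4 * β (m+1) - β m := hrec m
    have ht2 : β (t+2) = 4 * β (t+1) - β t := hrec t
    have hprod := prodId β hβ0 hβ1 hrec t (m+1)
    rw [show m+1+1 = m+2 from by omega, show m+1+t+2 = n from by omega] at hprod
    have hβnval : β n = (4 * β (m+1) - β m) * β (t+1) - β (m+1) * β t := by
      rw [← hm2, ← hprod]
    have hβn' : (4 * β (m+1) - β m) * β (t+1) - β (m+1) * β t ≠ 0 := by
      rw [← hβnval]; exact hβn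
    rw [ht2, hβnval] at e1 e2
    rw [hm2, ht2, hβnval] at e3
    have hβn'' : β (t+1) * (4 * β (m+1) - β m) - β t * β (m+1) ≠ 0 := by
      convert hβn' using 1; ring
    have hβn''' : (4 * β (m+1) - β m) * β (t+1) - β t * β (m+1) ≠ 0 := by
      convert hβn' using 1; ring
    rw [e1, e2, e3]
    match_scalars <;> field_simp <;> ring
end

section
/- Let n ≥ 3 and let s_0, s_1, …, s_n be vectors in ℝ^d. Then there is exactly one family of vectors b_0, b_1, …, b_n in ℝ^d satisfying the cyclic system b_{k−1} + 4 b_k + b_{k+1} = 6 s_k for all k = 0, 1, …, n, where indices are read modulo n+1. -/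
/-!
The system is `T b = 6 s` for the linear map `T b k = b (k - 1) + 4 b k + b (k + 1)` on the
finite-dimensional space of families. `T` is injective by a maximum principle: at an index
where `‖b k‖` is maximal, `T b = 0` forces `4 ‖b k‖ ≤ ‖b (k - 1)‖ + ‖b (k + 1)‖ ≤ 2 ‖b k‖`,
so `b = 0`. An injective endomorphism of a finite-dimensional space is bijective.
-/

section ThreeTerm

variable {ι E : Type*} [NormedAddCommGroup E] [NormedSpace ℝ E]

theorem eq_zero_of_add_four_smul_add_eq_zero [Finite ι] {b : ι → E} (p q : ι → ι)
    (hb : ∀ k, b (p k) + (4 : ℝ) • b k + b (q k) = 0) : b = 0 := by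
  cases isEmpty_or_nonempty ι
  · exact Subsingleton.elim _ _
  obtain ⟨k₀, hk₀⟩ := Finite.exists_max fun k => ‖b k‖
  have hk₀_zero : ‖b k₀‖ ≤ 0 := by
    have h4 : b (p k₀) + b (q k₀) = -((4 : ℝ) • b k₀) := by
      linear_combination (norm := module) hb k₀
    have : 4 * ‖b k₀‖ ≤ 2 * ‖b k₀‖ :=
      calc 4 * ‖b k₀‖ = ‖b (p k₀) + b (q k₀)‖ := by
            rw [h4, norm_neg, norm_smul, Real.norm_ofNat]
        _ ≤ ‖b (p k₀)‖ + ‖b (q k₀)‖ := norm_add_le _ _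
        _ ≤ ‖b k₀‖ + ‖b k₀‖ := add_le_add (hk₀ _) (hk₀ _)
        _ = 2 * ‖b k₀‖ := by ring
    linarith
  funext k
  exact norm_le_zero_iff.mp ((hk₀ k).trans hk₀_zero)

variable (E) in
def threeTermMap (p q : ι → ι) : (ι → E) →ₗ[ℝ] (ι → E) :=
  LinearMap.funLeft ℝ E p + (4 : ℝ) • LinearMap.id + LinearMap.funLeft ℝ E q

theorem threeTermMap_apply (p q : ι → ι) (b : ι → E) (k : ι) :
    threeTermMap E p q b k = b (p k) + (4 : ℝ) • b k + b (q k) :=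
  rfl

theorem threeTermMap_bijective [Finite ι] [FiniteDimensional ℝ E] (p q : ι → ι) :
    Function.Bijective (threeTermMap E p q) := by
  have hinj : Function.Injective (threeTermMap E p q) := by
    rw [← LinearMap.ker_eq_bot, LinearMap.ker_eq_bot']
    exact fun b hb => eq_zero_of_add_four_smul_add_eq_zero p q fun k => congrFun hb k
  exact ⟨hinj, LinearMap.injective_iff_surjective.mp hinj⟩

end ThreeTerm

theorem periodic_bspline_exists_unique_general (d n : ℕ)
    (s : Fin (n + 1) → EuclideanSpace ℝ (Fin d)) :
    ∃! b : Fin (n + 1) → EuclideanSpace ℝ (Fin d),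
      ∀ k : Fin (n + 1), b (k - 1) + (4 : ℝ) • b k + b (k + 1) = (6 : ℝ) • s k := by
  simpa only [funext_iff, threeTermMap_apply] using
    (threeTermMap_bijective (E := EuclideanSpace ℝ (Fin d)) (fun k => k - 1) (fun k => k + 1)
      ).existsUnique fun k => (6 : ℝ) • s k

/-- Given n ≥ 3 and points s_0, …, s_n in ℝ^d, there is exactly one family of vectors
b_0, …, b_n satisfying the cyclic system b_{k−1} + 4 b_k + b_{k+1} = 6 s_k for all
k = 0, …, n, indices read modulo n+1. -/
theorem periodic_bspline_exists_unique (d n : ℕ) (hn : 3 ≤ n)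
    (s : Fin (n + 1) → EuclideanSpace ℝ (Fin d)) :
    ∃! b : Fin (n + 1) → EuclideanSpace ℝ (Fin d),
      ∀ k : Fin (n + 1), b (k - 1) + (4 : ℝ) • b k + b (k + 1) = (6 : ℝ) • s k :=
  periodic_bspline_exists_unique_general d n s
end
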